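/- Let S be a nonempty finite set of points in ℝ³, let v be a point of ℝ³, and let F be a nonempty subset of ℝ³ (e.g. a mesh triangle). Then there exists q ∈ convexHull ℝ S with infDist(q, F) < dist q v if and only if there exists a vertex u ∈ S with infDist(u, F) < dist u v. -/

import Mathlib

/-!
The points at least as close to `b` as to `a` form a closed half-space, since
`dist x a ^ 2 - dist x b ^ 2` is an affine function of `x`. A half-space containing `S` contains
its convex hull; so if some `q` in the hull is strictly closer to a point `z ∈ F` than to `v`,
then so is some vertex, and `infDist u F ≤ dist u z` finishes the argument.
-/

open Metric

open scoped RealInnerProductSpace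

section HalfSpace

variable {E : Type*} [NormedAddCommGroup E] [InnerProductSpace ℝ E]

theorem dist_le_dist_iff_inner_le (x a b : E) :
    dist x a ≤ dist x b ↔ 2 * ⟪x, b - a⟫ ≤ ‖b‖ ^ 2 - ‖a‖ ^ 2 := by
  rw [dist_eq_norm, dist_eq_norm, ← pow_le_pow_iff_left₀ (norm_nonneg _) (norm_nonneg _)
    two_ne_zero, norm_sub_sq_real, norm_sub_sq_real, inner_sub_right]
  constructor <;> intro h <;> linarith

theorem convex_setOf_dist_le_dist (a b : E) : Convex ℝ {x : E | dist x a ≤ dist x b} := by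
  simp only [dist_le_dist_iff_inner_le]
  exact convex_halfSpace_le
    ⟨fun x y => by rw [inner_add_left, mul_add], fun c x => by rw [real_inner_smul_left]; ring⟩ _

theorem exists_dist_lt_dist_of_mem_convexHull {s : Set E} {q a b : E}
    (hq : q ∈ convexHull ℝ s) (hqab : dist q a < dist q b) : ∃ u ∈ s, dist u a < dist u b := by
  by_contra! hs
  have hqba : dist q b ≤ dist q a := convexHull_min hs (convex_setOf_dist_le_dist b a) hq
  exact hqba.not_gt hqab

end HalfSpace

theorem interference_iff_exists_vertex_general
    (S : Finset (EuclideanSpace ℝ (Fin 3)))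
    (v : EuclideanSpace ℝ (Fin 3))
    (F : Set (EuclideanSpace ℝ (Fin 3))) (hF : F.Nonempty) :
    (∃ q ∈ convexHull ℝ (S : Set (EuclideanSpace ℝ (Fin 3))),
        Metric.infDist q F < dist q v) ↔
      ∃ u ∈ S, Metric.infDist u F < dist u v := by
  constructor
  · rintro ⟨q, hq, hqF⟩
    obtain ⟨z, hzF, hqz⟩ := (infDist_lt_iff hF).mp hqF
    obtain ⟨u, huS, huz⟩ := exists_dist_lt_dist_of_mem_convexHull hq hqz
    exact ⟨u, huS, (infDist_le_dist_of_mem hzF).trans_lt huz⟩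
  · rintro ⟨u, huS, hu⟩
    exact ⟨u, subset_convexHull ℝ _ huS, hu⟩

/-- Reduction of interference detection over a convex cell to its corners: a nonempty set
`F` provides a strictly shorter distance than the site `v` for some point of the convex
hull of `S` iff it does so for some vertex `u ∈ S`. -/
theorem interference_iff_exists_vertex
    (S : Finset (EuclideanSpace ℝ (Fin 3))) (hS : S.Nonempty)
    (v : EuclideanSpace ℝ (Fin 3))
    (F : Set (EuclideanSpace ℝ (Fin 3))) (hF : F.Nonempty) :
    (∃ q ∈ convexHull ℝ (S : Set (EuclideanSpace ℝ (Fin 3))),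
        Metric.infDist q F < dist q v) ↔
      ∃ u ∈ S, Metric.infDist u F < dist u v :=
  interference_iff_exists_vertex_general S v F hF
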